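/- Let n ≥ 1, let A be an IFM of order n and let λ ∈ [0,1). If r, s, j are indices and Lr, Ls, Mr, Ms are reals with (A^m)μ r j → Lr, (A^m)μ s j → Ls, (A^m)ν r j → Mr, (A^m)ν s j → Ms as m → ∞ (powers taken with the ∗ operation), then Lr = Ls and Mr = Ms; that is, in the limit matrix all entries of each column are identical. -/

import Mathlib

open Filter Topology

/-- Membership scalar operation of the convex combination of max-min and
maxarithmetic mean–minarithmetic mean: `x ⊛ y = λ·min(x,y) + (1-λ)·(x+y)/2`. -/
noncomputable def starMu (lam x y : ℝ) : ℝ :=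
  lam * min x y + (1 - lam) * ((x + y) / 2)

/-- Non-membership scalar operation:
`x ⊛' y = λ·max(x,y) + (1-λ)·(x+y)/2`. -/
noncomputable def starNu (lam x y : ℝ) : ℝ :=
  lam * max x y + (1 - lam) * ((x + y) / 2)

/-- `A` (given by membership part `Amu` and non-membership part `Anu`) is an
intuitionistic fuzzy matrix. -/
def IsIFM (n : ℕ) (Amu Anu : Fin n → Fin n → ℝ) : Prop :=
  ∀ i j, 0 ≤ Amu i j ∧ 0 ≤ Anu i j ∧ Amu i j + Anu i j ≤ 1

/-- Powers of an IFM under the convex combination `∗` of the max-min and the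
maxarithmetic mean–minarithmetic mean operations: `A^1 = A`,
`A^(k+1) = A^k ∗ A` with
`(X ∗ A)μ i j = max_t (Xμ i t ⊛ Aμ t j)` and
`(X ∗ A)ν i j = min_t (Xν i t ⊛' Aν t j)`.
(The value at `0` is irrelevant; it is set to `A`.) -/
noncomputable def sPow (n : ℕ) (lam : ℝ) (Amu Anu : Fin n → Fin n → ℝ) :
    ℕ → (Fin n → Fin n → ℝ) × (Fin n → Fin n → ℝ)
  | 0 => (Amu, Anu)
  | 1 => (Amu, Anu)
  | m + 2 =>
    let X := sPow n lam Amu Anu (m + 1)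
    (fun i j => ⨆ t : Fin n, starMu lam (X.1 i t) (Amu t j),
     fun i j => ⨅ t : Fin n, starNu lam (X.2 i t) (Anu t j))

/-! The scalar operation `x ↦ starMu λ x y` is a contraction with constant `(1 + λ)/2 < 1`, and a
maximum over `t` of contractions is again one; hence the difference between rows `r` and `s` of
the `μ`-part of `A^m` decays geometrically, so the limits in a column agree. The `ν`-part is the
`μ`-part of the negated matrix, since `starNu λ x y = -starMu λ (-x) (-y)`. -/

noncomputable def maxProd {ι κ ο : Type*} (f : ℝ → ℝ → ℝ) (X : ι → κ → ℝ) (B : κ → ο → ℝ) :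
    ι → ο → ℝ :=
  fun i j => ⨆ t, f (X i t) (B t j)

lemma abs_starMu_sub_starMu_le {lam : ℝ} (h0 : 0 ≤ lam) (h1 : lam ≤ 1) (x x' y : ℝ) :
    |starMu lam x y - starMu lam x' y| ≤ (1 + lam) / 2 * |x - x'| := by
  have hmin : |min x y - min x' y| ≤ |x - x'| := by
    simpa only [sub_self, abs_zero, max_eq_left (abs_nonneg (x - x'))]
      using abs_min_sub_min_le_max x y x' y
  calc |starMu lam x y - starMu lam x' y|
      = |lam * (min x y - min x' y) + (1 - lam) / 2 * (x - x')| := by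
        unfold starMu; congr 1; ring
    _ ≤ lam * |min x y - min x' y| + (1 - lam) / 2 * |x - x'| := by
        refine (abs_add_le _ _).trans_eq ?_
        rw [abs_mul, abs_mul, abs_of_nonneg h0, abs_of_nonneg (a := (1 - lam) / 2) (by linarith)]
    _ ≤ lam * |x - x'| + (1 - lam) / 2 * |x - x'| := by gcongr
    _ = (1 + lam) / 2 * |x - x'| := by ring

lemma starNu_eq_neg_starMu_neg (lam x y : ℝ) : starNu lam x y = -starMu lam (-x) (-y) := by
  unfold starNu starMu
  rw [min_neg_neg]
  ring

lemma Real.neg_iInf {ι : Sort*} (f : ι → ℝ) : -⨅ i, f i = ⨆ i, -f i := by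
  simpa using Real.mul_iInf_of_nonpos (r := -1) (by norm_num) f

lemma sPow_fst_succ_succ (n : ℕ) (lam : ℝ) (Amu Anu : Fin n → Fin n → ℝ) (m : ℕ) :
    (sPow n lam Amu Anu (m + 2)).1 = maxProd (starMu lam) (sPow n lam Amu Anu (m + 1)).1 Amu :=
  rfl

lemma neg_sPow_snd_succ_succ (n : ℕ) (lam : ℝ) (Amu Anu : Fin n → Fin n → ℝ) (m : ℕ) :
    -(sPow n lam Amu Anu (m + 2)).2 =
      maxProd (starMu lam) (-(sPow n lam Amu Anu (m + 1)).2) (-Anu) := by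
  ext i j
  simp only [sPow, maxProd, Pi.neg_apply, Real.neg_iInf, starNu_eq_neg_starMu_neg, neg_neg]

section MaxProd

variable {ι κ : Type*} [Finite κ] [Nonempty κ]

lemma abs_ciSup_sub_ciSup_le {f g : κ → ℝ} {δ : ℝ} (h : ∀ t, |f t - g t| ≤ δ) :
    |(⨆ t, f t) - ⨆ t, g t| ≤ δ := by
  have key : ∀ f g : κ → ℝ, (∀ t, |f t - g t| ≤ δ) → ⨆ t, f t ≤ (⨆ t, g t) + δ :=
    fun f g h => ciSup_le fun t => by
      linarith [le_ciSup (Finite.bddAbove_range g) t, (abs_le.1 (h t)).2]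
  exact abs_sub_le_iff.2
    ⟨by linarith [key f g h], by linarith [key g f fun t => abs_sub_comm (f t) (g t) ▸ h t]⟩

variable {f : ℝ → ℝ → ℝ} {c : ℝ}

lemma abs_maxProd_sub_maxProd_le {ο : Type*} (hf : ∀ x x' y, |f x y - f x' y| ≤ c * |x - x'|)
    (hc : 0 ≤ c) {X : ι → κ → ℝ} {B : κ → ο → ℝ} {r s : ι} {δ : ℝ}
    (hX : ∀ t, |X r t - X s t| ≤ δ) (j : ο) :
    |maxProd f X B r j - maxProd f X B s j| ≤ c * δ :=
  abs_ciSup_sub_ciSup_le fun t => (hf _ _ _).trans (mul_le_mul_of_nonneg_left (hX t) hc)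

variable {X : ℕ → ι → κ → ℝ} {B : κ → κ → ℝ}

lemma abs_sub_le_pow_mul_of_eq_maxProd (hf : ∀ x x' y, |f x y - f x' y| ≤ c * |x - x'|)
    (hc : 0 ≤ c) (hX : ∀ m, X (m + 1) = maxProd f (X m) B) {r s : ι} {D : ℝ}
    (h0 : ∀ t, |X 0 r t - X 0 s t| ≤ D) (m : ℕ) (t : κ) :
    |X m r t - X m s t| ≤ c ^ m * D := by
  induction m generalizing t with
  | zero => simpa using h0 t
  | succ m ih =>
    rw [hX, pow_succ', mul_assoc]
    exact abs_maxProd_sub_maxProd_le hf hc ih t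

lemma eq_of_tendsto_of_abs_sub_le_pow_mul {u v : ℕ → ℝ} {a b D : ℝ} (hc0 : 0 ≤ c) (hc1 : c < 1)
    (h : ∀ m, |u m - v m| ≤ c ^ m * D) (hu : Tendsto u atTop (𝓝 a))
    (hv : Tendsto v atTop (𝓝 b)) : a = b := by
  have hdiff : Tendsto (fun m => u m - v m) atTop (𝓝 0) :=
    squeeze_zero_norm h (by simpa using (tendsto_pow_atTop_nhds_zero_of_lt_one hc0 hc1).mul_const D)
  exact sub_eq_zero.1 (tendsto_nhds_unique (hu.sub hv) hdiff)

lemma eq_of_tendsto_of_eq_maxProd (hf : ∀ x x' y, |f x y - f x' y| ≤ c * |x - x'|)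
    (hc0 : 0 ≤ c) (hc1 : c < 1) (hX : ∀ m, X (m + 1) = maxProd f (X m) B) {r s : ι} {j : κ}
    {a b : ℝ} (hr : Tendsto (fun m => X m r j) atTop (𝓝 a))
    (hs : Tendsto (fun m => X m s j) atTop (𝓝 b)) : a = b :=
  eq_of_tendsto_of_abs_sub_le_pow_mul hc0 hc1
    (abs_sub_le_pow_mul_of_eq_maxProd hf hc0 hX
      (fun t => le_ciSup (Finite.bddAbove_range fun t => |X 0 r t - X 0 s t|) t) · j) hr hs

end MaxProd

theorem sPow_limit_columns_identical_general (n : ℕ)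
    (Amu Anu : Fin n → Fin n → ℝ)
    (lam : ℝ) (hlam : lam ∈ Set.Ico (0 : ℝ) 1)
    (r s j : Fin n) (Lr Ls Mr Ms : ℝ)
    (hLr : Tendsto (fun m => (sPow n lam Amu Anu m).1 r j) atTop (𝓝 Lr))
    (hLs : Tendsto (fun m => (sPow n lam Amu Anu m).1 s j) atTop (𝓝 Ls))
    (hMr : Tendsto (fun m => (sPow n lam Amu Anu m).2 r j) atTop (𝓝 Mr))
    (hMs : Tendsto (fun m => (sPow n lam Amu Anu m).2 s j) atTop (𝓝 Ms)) :
    Lr = Ls ∧ Mr = Ms := by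
  obtain ⟨hlam0, hlam1⟩ := hlam
  have : Nonempty (Fin n) := ⟨r⟩
  have hf := abs_starMu_sub_starMu_le hlam0 hlam1.le
  have hc0 : 0 ≤ (1 + lam) / 2 := by linarith
  have hc1 : (1 + lam) / 2 < 1 := by linarith
  constructor
  · exact eq_of_tendsto_of_eq_maxProd hf hc0 hc1
      (X := fun m => (sPow n lam Amu Anu (m + 1)).1) (sPow_fst_succ_succ n lam Amu Anu)
      ((tendsto_add_atTop_iff_nat 1).2 hLr) ((tendsto_add_atTop_iff_nat 1).2 hLs)
  · exact neg_inj.1 <| eq_of_tendsto_of_eq_maxProd hf hc0 hc1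
      (X := fun m => -(sPow n lam Amu Anu (m + 1)).2) (neg_sPow_snd_succ_succ n lam Amu Anu)
      ((tendsto_add_atTop_iff_nat 1).2 hMr).neg ((tendsto_add_atTop_iff_nat 1).2 hMs).neg

/-- Theorem 4.5 (second part): in the limit of the powers of an IFM under the
`∗` operation, all entries of each column coincide. -/
theorem sPow_limit_columns_identical (n : ℕ) (hn : 1 ≤ n)
    (Amu Anu : Fin n → Fin n → ℝ) (hA : IsIFM n Amu Anu)
    (lam : ℝ) (hlam : lam ∈ Set.Ico (0 : ℝ) 1)
    (r s j : Fin n) (Lr Ls Mr Ms : ℝ)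
    (hLr : Tendsto (fun m => (sPow n lam Amu Anu m).1 r j) atTop (𝓝 Lr))
    (hLs : Tendsto (fun m => (sPow n lam Amu Anu m).1 s j) atTop (𝓝 Ls))
    (hMr : Tendsto (fun m => (sPow n lam Amu Anu m).2 r j) atTop (𝓝 Mr))
    (hMs : Tendsto (fun m => (sPow n lam Amu Anu m).2 s j) atTop (𝓝 Ms)) :
    Lr = Ls ∧ Mr = Ms :=
  sPow_limit_columns_identical_general n Amu Anu lam hlam r s j Lr Ls Mr Ms hLr hLs hMr hMs
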